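/- For every k ≥ 0 there is a scalar c ∈ ℝ (depending only on k) such that S₁^k(0) = c·p₁ and S₂^k(0) = c·p₂; moreover the midpoint of S₁(S₂^k(0)) and S₂(S₁^k(0)) equals (p₁ + p₂)/(N+2), and in particular S₁(p₂) = S₂(p₁) = (p₁ + p₂)/(N+2). (Computations from the proof of Theorem 2.5.) -/

import Mathlib

open Set Filter

noncomputable section

abbrev E (N : ℕ) := EuclideanSpace ℝ (Fin N)

/-- Vertex `p_j` of the regular simplex. -/
def gPt (N : ℕ) (j : Fin N) : E N :=
  (Real.sqrt 2)⁻¹ • (EuclideanSpace.single j (1 : ℝ) -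
    (N : ℝ)⁻¹ • ∑ i : Fin N, EuclideanSpace.single i (1 : ℝ))

/-- The affine map `S_j`. -/
def gS (N : ℕ) (j : Fin N) (x : E N) : E N :=
  ((N : ℝ) + 2)⁻¹ • x +
    (((N : ℝ) + 2)⁻¹ * (2 + ((N : ℝ) - 1) * (inner ℝ x (gPt N j) : ℝ) / ‖gPt N j‖ ^ 2)) • gPt N j

/-! The proof is a computation in the span of the simplex vertices, driven by their Gram matrix
`⟪p_i, p_j⟫ = (δ_ij - 1/N) / 2`. It makes `S_j` act on the line `ℝ p_j` by the scalar map
`c ↦ (N c + 2)/(N + 2)`, so `S_j^k(0) = c_k p_j` with `c_k` independent of `j`, and sends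
`c p_j` to `(c p_j + (2 - c) p_i)/(N + 2)` for `i ≠ j`; averaging the two cross terms cancels `c`. -/

section Simplex

variable {N : ℕ}

theorem inner_gPt (i j : Fin N) :
    inner ℝ (gPt N i) (gPt N j) = (2 : ℝ)⁻¹ * ((if i = j then 1 else 0) - (N : ℝ)⁻¹) := by
  have hN : (N : ℝ) ≠ 0 := by have := i.pos; positivity
  have hsqrt : (Real.sqrt 2)⁻¹ * (Real.sqrt 2)⁻¹ = (2 : ℝ)⁻¹ := by
    rw [← mul_inv, Real.mul_self_sqrt zero_le_two]
  simp only [gPt]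
  set u : E N := ∑ k : Fin N, EuclideanSpace.single k (1 : ℝ)
  have hsingle : ∀ k, inner ℝ (EuclideanSpace.single k (1 : ℝ)) u = 1 := by
    intro k; simp [u, inner_sum, EuclideanSpace.inner_single_left, PiLp.single_apply]
  have hu : inner ℝ u u = N := by
    rw [sum_inner]; simp [hsingle]
  simp only [real_inner_smul_left, real_inner_smul_right, inner_sub_left, inner_sub_right,
    real_inner_comm _ u, hsingle, hu, EuclideanSpace.inner_single_left, PiLp.single_apply,
    map_one, one_mul]
  rw [← hsqrt]
  field_simp
  ring

theorem norm_gPt_sq (j : Fin N) : ‖gPt N j‖ ^ 2 = ((N : ℝ) - 1) / (2 * N) := by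
  have hN : (N : ℝ) ≠ 0 := by have := j.pos; positivity
  rw [← real_inner_self_eq_norm_sq, inner_gPt, if_pos rfl]
  field_simp

theorem gS_eq (hN : 2 ≤ N) (j : Fin N) (x : E N) :
    gS N j x = ((N : ℝ) + 2)⁻¹ • (x + (2 + 2 * N * inner ℝ x (gPt N j)) • gPt N j) := by
  have hN1 : (N : ℝ) - 1 ≠ 0 := by
    have : (2 : ℝ) ≤ N := by exact_mod_cast hN
    linarith
  have hN0 : (N : ℝ) ≠ 0 := by positivity
  rw [gS, norm_gPt_sq]
  match_scalars <;> field_simp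

theorem gS_smul_gPt_self (hN : 2 ≤ N) (j : Fin N) (c : ℝ) :
    gS N j (c • gPt N j) = ((N * c + 2) / (N + 2)) • gPt N j := by
  rw [gS_eq hN, real_inner_smul_left, inner_gPt, if_pos rfl]
  match_scalars
  field_simp
  ring

theorem gS_smul_gPt_of_ne (hN : 2 ≤ N) {i j : Fin N} (hij : i ≠ j) (c : ℝ) :
    gS N i (c • gPt N j) = ((N : ℝ) + 2)⁻¹ • (c • gPt N j + (2 - c) • gPt N i) := by
  rw [gS_eq hN, real_inner_smul_left, inner_gPt, if_neg hij.symm]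
  match_scalars <;> field_simp
  ring

theorem iterate_gS_zero (hN : 2 ≤ N) (j : Fin N) (k : ℕ) :
    (gS N j)^[k] 0 = ((fun c : ℝ => (N * c + 2) / (N + 2))^[k] 0) • gPt N j := by
  have hconj : Function.Semiconj (· • gPt N j) (fun c : ℝ => (N * c + 2) / (N + 2)) (gS N j) :=
    fun c => (gS_smul_gPt_self hN j c).symm
  simpa using (hconj.iterate_right k 0).symm

theorem midpoint_gS_smul_gPt (hN : 2 ≤ N) {i j : Fin N} (hij : i ≠ j) (c : ℝ) :
    midpoint ℝ (gS N i (c • gPt N j)) (gS N j (c • gPt N i)) =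
      ((N : ℝ) + 2)⁻¹ • (gPt N i + gPt N j) := by
  rw [gS_smul_gPt_of_ne hN hij, gS_smul_gPt_of_ne hN hij.symm, midpoint_eq_smul_add, invOf_eq_inv]
  match_scalars <;> ring

theorem gS_gPt_of_ne (hN : 2 ≤ N) {i j : Fin N} (hij : i ≠ j) :
    gS N i (gPt N j) = ((N : ℝ) + 2)⁻¹ • (gPt N i + gPt N j) := by
  rw [← one_smul ℝ (gPt N j), gS_smul_gPt_of_ne hN hij]
  match_scalars <;> norm_num

end Simplex

/-- iterates of `0` under `S₁`, `S₂` and the midpoint computation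
from the proof of Theorem 2.5. -/
theorem iterates_and_midpoint (N : ℕ) (hN : 2 ≤ N) :
    (∀ k : ℕ, ∃ c : ℝ,
      (gS N ⟨0, by omega⟩)^[k] 0 = c • gPt N ⟨0, by omega⟩ ∧
      (gS N ⟨1, by omega⟩)^[k] 0 = c • gPt N ⟨1, by omega⟩ ∧
      midpoint ℝ (gS N ⟨0, by omega⟩ ((gS N ⟨1, by omega⟩)^[k] 0))
          (gS N ⟨1, by omega⟩ ((gS N ⟨0, by omega⟩)^[k] 0)) =
        ((N : ℝ) + 2)⁻¹ • (gPt N ⟨0, by omega⟩ + gPt N ⟨1, by omega⟩)) ∧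
    gS N ⟨0, by omega⟩ (gPt N ⟨1, by omega⟩) =
      ((N : ℝ) + 2)⁻¹ • (gPt N ⟨0, by omega⟩ + gPt N ⟨1, by omega⟩) ∧
    gS N ⟨1, by omega⟩ (gPt N ⟨0, by omega⟩) =
      ((N : ℝ) + 2)⁻¹ • (gPt N ⟨0, by omega⟩ + gPt N ⟨1, by omega⟩) := by
  have h01 : (⟨0, by omega⟩ : Fin N) ≠ ⟨1, by omega⟩ := by simp
  refine ⟨fun k => ⟨_, iterate_gS_zero hN _ k, iterate_gS_zero hN _ k, ?_⟩,
    gS_gPt_of_ne hN h01, ?_⟩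
  · rw [iterate_gS_zero hN, iterate_gS_zero hN]
    exact midpoint_gS_smul_gPt hN h01 _
  · rw [gS_gPt_of_ne hN h01.symm, add_comm (gPt N _) (gPt N _)]
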